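/- Let ℂ : Sym₃ → Sym₃ be an elasticity tensor that is coercive with constant c > 0, let Z̄ ∈ Sym₂, let G ∈ ℝ³, and let z ∈ ℝ³ be defined by z_j = (𝕔⁻¹)_{ji}( G_i − (ℂZ̄)_{i3} ). Then, with Z := Z̄ + z⊙e₃ and 𝖿 := 𝕔⁻¹G, one has the energy splitting ℂZ·Z = C̄Z̄·Z̄ + 𝕔𝖿·𝖿. -/

import Mathlib

open Matrix
open scoped BigOperators

noncomputable section

/-- The space of real 3×3 matrices; symmetric ones form `Sym₃`. -/
abbrev M3 : Type := Matrix (Fin 3) (Fin 3) ℝ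

/-- The Frobenius pairing `A·B := tr (A*B)`. -/
def dot3 (A B : M3) : ℝ := (A * B).trace

/-- The standard basis vector `e i` of `ℝ³`. -/
def bv (i : Fin 3) : Fin 3 → ℝ := Pi.single i 1

/-- The symmetrized tensor product `a ⊙ b := (1/2)(a⊗b + b⊗a)`. -/
def symOd (a b : Fin 3 → ℝ) : M3 := Matrix.of fun i j => (a i * b j + b i * a j) / 2

/-- `b ⊙ e₃`. -/
def od3 (b : Fin 3 → ℝ) : M3 := symOd b (bv 2)

/-- Components `ℂ_{ijkl} := ℂ(e_k⊙e_l)·(e_i⊙e_j)` of the elasticity tensor. -/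
def Ccomp (C : M3 →ₗ[ℝ] M3) (i j k l : Fin 3) : ℝ :=
  dot3 (C (symOd (bv k) (bv l))) (symOd (bv i) (bv j))

/-- The matrix `𝕔` with `𝕔_{ij} := ℂ_{i3j3}`. -/
def cmat (C : M3 →ₗ[ℝ] M3) : M3 := Matrix.of fun i j => Ccomp C i 2 j 2

/-- Components `C̄_{αβγδ} := ℂ_{αβγδ} − ℂ_{αβj3}(𝕔⁻¹)_{ji}ℂ_{i3γδ}` of the reduced tensor. -/
def cbar (C : M3 →ₗ[ℝ] M3) (α β γ δ : Fin 3) : ℝ :=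
  Ccomp C α β γ δ
    - ∑ j : Fin 3, ∑ i : Fin 3, Ccomp C α β j 2 * (cmat C)⁻¹ j i * Ccomp C i 2 γ δ

/-- The quadratic form `C̄Ā·Ā`. -/
def qbar (C : M3 →ₗ[ℝ] M3) (A : M3) : ℝ :=
  ∑ α : Fin 3, ∑ β : Fin 3, ∑ γ : Fin 3, ∑ δ : Fin 3, cbar C α β γ δ * A γ δ * A α β

/-- `A` has vanishing third row and column (identification of `Sym₂` inside `Sym₃`). -/
def planar (A : M3) : Prop := ∀ i : Fin 3, A i 2 = 0 ∧ A 2 i = 0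

/-- `z_j := (𝕔⁻¹)_{ji}( G_i − (ℂZ̄)_{i3} )`. -/
def zf (C : M3 →ₗ[ℝ] M3) (Z : M3) (G : Fin 3 → ℝ) : Fin 3 → ℝ :=
  fun j => ∑ i : Fin 3, (cmat C)⁻¹ j i * (G i - (C Z) i 2)

/-! Write `b := (ℂZ̄)e₃` and `M := 𝕔`. By self-adjointness of `ℂ`, the cross term of
`ℂZ·Z` is `2 ℂZ̄·(z⊙e₃) = 2 z·b`, while `ℂ(z⊙e₃)·(z⊙e₃) = Mz·z`; contracting the definition of
`C̄` with `Z̄` gives `C̄Z̄·Z̄ = ℂZ̄·Z̄ − b·M⁻¹b`. Since `Mz = G − b`, what remains is completing the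
square, `Mz·z + 2 z·b = G·M⁻¹G − b·M⁻¹b`, valid for any symmetric invertible `M`; coercivity of
`ℂ` makes `M` positive definite, hence invertible. -/

theorem Finset.sum_comm₄ {ι κ ι' κ' M : Type*} [AddCommMonoid M] {s : Finset ι} {t : Finset κ}
    {u : Finset ι'} {v : Finset κ'} {f : ι → κ → ι' → κ' → M} :
    ∑ a ∈ s, ∑ b ∈ t, ∑ c ∈ u, ∑ d ∈ v, f a b c d
      = ∑ c ∈ u, ∑ d ∈ v, ∑ a ∈ s, ∑ b ∈ t, f a b c d := by
  rw [Finset.sum_comm_cycle]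
  refine Finset.sum_congr rfl fun _ _ => ?_
  simp_rw [Finset.sum_comm (s := t) (t := v)]
  exact Finset.sum_comm

theorem Matrix.IsSymm.complete_square {n R : Type*} [Fintype n] [DecidableEq n] [CommRing R]
    {M : Matrix n n R} (hM : M.IsSymm) (hdet : IsUnit M.det) (b G : n → R) :
    let z := M⁻¹ *ᵥ (G - b)
    z ⬝ᵥ (M *ᵥ z) + 2 * (z ⬝ᵥ b) = (M *ᵥ (M⁻¹ *ᵥ G)) ⬝ᵥ (M⁻¹ *ᵥ G) - b ⬝ᵥ (M⁻¹ *ᵥ b) := by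
  intro z
  have hinv : M⁻¹ᵀ = M⁻¹ := by rw [transpose_nonsing_inv, hM.eq]
  have hswap (u v : n → R) : (M⁻¹ *ᵥ u) ⬝ᵥ v = u ⬝ᵥ (M⁻¹ *ᵥ v) := by
    rw [dotProduct_mulVec, ← vecMul_transpose, hinv]
  simp only [z, mulVec_mulVec, mul_nonsing_inv _ hdet, one_mulVec]
  rw [hswap, hswap]
  simp only [mulVec_sub, dotProduct_sub, sub_dotProduct]
  linear_combination (hswap G b).symm.trans (dotProduct_comm _ _)

lemma dot3_comm (A B : M3) : dot3 A B = dot3 B A := trace_mul_comm A B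

lemma dot3_sum_left {ι : Type*} (s : Finset ι) (f : ι → M3) (B : M3) :
    dot3 (∑ i ∈ s, f i) B = ∑ i ∈ s, dot3 (f i) B := by
  simp [dot3, Finset.sum_mul]

lemma dot3_sum_right {ι : Type*} (s : Finset ι) (A : M3) (f : ι → M3) :
    dot3 A (∑ i ∈ s, f i) = ∑ i ∈ s, dot3 A (f i) := by
  simp [dot3, Finset.mul_sum]

lemma dot3_smul_left (r : ℝ) (A B : M3) : dot3 (r • A) B = r * dot3 A B := by
  simp [dot3]

lemma dot3_smul_right (r : ℝ) (A B : M3) : dot3 A (r • B) = r * dot3 A B := by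
  simp [dot3]

lemma symOd_isSymm (a b : Fin 3 → ℝ) : (symOd a b).IsSymm :=
  IsSymm.ext fun i j => by simp only [symOd, of_apply]; ring

lemma dot3_symOd_bv (B : M3) (i j : Fin 3) :
    dot3 B (symOd (bv i) (bv j)) = (B i j + B j i) / 2 := by
  simp only [dot3, trace, diag, mul_apply, symOd, bv, of_apply, Fin.sum_univ_three]
  fin_cases i <;> fin_cases j <;> simp <;> ring

lemma sum_smul_symOd_bv {A : M3} (hA : A.IsSymm) :
    ∑ i, ∑ j, A i j • symOd (bv i) (bv j) = A := by
  ext k l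
  simp only [Matrix.sum_apply, symOd, bv, Fin.sum_univ_three]
  fin_cases k <;> fin_cases l <;> simp [hA.apply 1 0, hA.apply 2 0, hA.apply 2 1] <;> ring

lemma od3_eq_sum (x : Fin 3 → ℝ) : od3 x = ∑ j, x j • symOd (bv j) (bv 2) := by
  ext k l
  simp only [od3, Matrix.sum_apply, Matrix.smul_apply, symOd, bv, of_apply, Fin.sum_univ_three,
    smul_eq_mul]
  fin_cases k <;> fin_cases l <;> simp <;> ring

lemma od3_isSymm (x : Fin 3 → ℝ) : (od3 x).IsSymm := symOd_isSymm _ _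

lemma dot3_od3 {B : M3} (hB : B.IsSymm) (x : Fin 3 → ℝ) :
    dot3 B (od3 x) = x ⬝ᵥ Bᵀ 2 := by
  simp only [od3_eq_sum, dot3_sum_right, dot3_smul_right, dot3_symOd_bv, hB.apply 2, dotProduct,
    transpose_apply]
  ring_nf

lemma dot3_od3_self (x : Fin 3 → ℝ) : dot3 (od3 x) (od3 x) = (x 0 ^ 2 + x 1 ^ 2) / 2 + x 2 ^ 2 := by
  simp only [dot3, trace, diag_apply, mul_apply, od3, symOd, bv, of_apply, Fin.sum_univ_three,
    Pi.single_apply, Fin.reduceEq, ↓reduceIte]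
  ring

section Tensor

variable (C : M3 →ₗ[ℝ] M3)

lemma Ccomp_swap (hC : ∀ A B : M3, A.IsSymm → B.IsSymm → dot3 (C A) B = dot3 A (C B))
    (i j k l : Fin 3) : Ccomp C i j k l = Ccomp C k l i j := by
  rw [Ccomp, hC _ _ (symOd_isSymm _ _) (symOd_isSymm _ _), dot3_comm, Ccomp]

lemma cmat_isSymm (hC : ∀ A B : M3, A.IsSymm → B.IsSymm → dot3 (C A) B = dot3 A (C B)) :
    (cmat C).IsSymm :=
  IsSymm.ext fun i j => Ccomp_swap C hC j 2 i 2

lemma sum_Ccomp_mul {A : M3} (hA : A.IsSymm) (i j : Fin 3) :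
    ∑ k, ∑ l, Ccomp C i j k l * A k l = dot3 (C A) (symOd (bv i) (bv j)) := by
  conv_rhs => rw [← sum_smul_symOd_bv hA]
  simp only [map_sum, map_smul, dot3_sum_left, dot3_smul_left, Ccomp, mul_comm]

lemma dot3_apply_self_eq_sum {A : M3} (hA : A.IsSymm) :
    dot3 (C A) A = ∑ i, ∑ j, ∑ k, ∑ l, Ccomp C i j k l * A k l * A i j := by
  calc dot3 (C A) A = dot3 (C A) (∑ i, ∑ j, A i j • symOd (bv i) (bv j)) := by
        rw [sum_smul_symOd_bv hA]
    _ = ∑ i, ∑ j, (∑ k, ∑ l, Ccomp C i j k l * A k l) * A i j := by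
        simp only [dot3_sum_right, dot3_smul_right, sum_Ccomp_mul C hA, mul_comm (A _ _)]
    _ = _ := by simp only [Finset.sum_mul]

lemma sum_Ccomp_mul_eq_apply {A : M3} (hA : A.IsSymm) (hCA : (C A).IsSymm) (i : Fin 3) :
    ∑ k, ∑ l, Ccomp C i 2 k l * A k l = C A i 2 := by
  rw [sum_Ccomp_mul C hA, dot3_symOd_bv, hCA.apply i 2]
  ring

lemma qbar_eq (hC : ∀ A B : M3, A.IsSymm → B.IsSymm → dot3 (C A) B = dot3 A (C B)) {A : M3}
    (hA : A.IsSymm) (hCA : (C A).IsSymm) :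
    qbar C A = dot3 (C A) A - (C A)ᵀ 2 ⬝ᵥ ((cmat C)⁻¹ *ᵥ (C A)ᵀ 2) := by
  have hb := sum_Ccomp_mul_eq_apply C hA hCA
  have hb' (j : Fin 3) : ∑ i, ∑ k, Ccomp C i k j 2 * A i k = C A j 2 := by
    simp only [Ccomp_swap C hC _ _ j 2, hb]
  simp only [qbar, cbar, sub_mul, Finset.sum_sub_distrib, ← dot3_apply_self_eq_sum C hA]
  congr 1
  calc _ = ∑ α, ∑ β, (∑ j, ∑ i, Ccomp C α β j 2 * (cmat C)⁻¹ j i * C A i 2) * A α β := by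
        refine Finset.sum_congr rfl fun α _ => Finset.sum_congr rfl fun β _ => ?_
        simp only [← Finset.sum_mul]
        congr 1
        simp only [← hb, Finset.sum_mul, Finset.mul_sum, mul_assoc]
        exact Finset.sum_comm₄
    _ = ∑ j, ∑ i, (∑ α, ∑ β, Ccomp C α β j 2 * A α β) * (cmat C)⁻¹ j i * C A i 2 := by
        simp only [Finset.sum_mul]
        refine Finset.sum_comm₄.trans <| Finset.sum_congr rfl fun _ _ => Finset.sum_congr rfl
          fun _ _ => Finset.sum_congr rfl fun _ _ => Finset.sum_congr rfl fun _ _ => by ring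
    _ = _ := by simp only [hb', dotProduct, mulVec, Finset.mul_sum, mul_assoc, transpose_apply]

lemma dot3_apply_od3 (x y : Fin 3 → ℝ) :
    dot3 (C (od3 x)) (od3 y) = y ⬝ᵥ (cmat C *ᵥ x) := by
  simp only [od3_eq_sum, map_sum, map_smul, dot3_sum_left, dot3_sum_right, dot3_smul_left,
    dot3_smul_right, dotProduct, mulVec, cmat, of_apply, Ccomp, Finset.mul_sum, mul_comm (x _)]

lemma cmat_posDef (hC : ∀ A B : M3, A.IsSymm → B.IsSymm → dot3 (C A) B = dot3 A (C B))
    {c : ℝ} (hc : 0 < c) (hcoer : ∀ A : M3, A.IsSymm → c * dot3 A A ≤ dot3 (C A) A) :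
    (cmat C).PosDef := by
  refine PosDef.of_dotProduct_mulVec_pos (cmat_isSymm C hC) fun x hx => ?_
  have hpos : 0 < dot3 (od3 x) (od3 x) := by
    have : 0 < star x ⬝ᵥ x := dotProduct_star_self_pos_iff.mpr hx
    rw [dot3_od3_self]
    simp only [dotProduct, Fin.sum_univ_three, Pi.star_apply, star_trivial] at this
    nlinarith
  calc 0 < c * dot3 (od3 x) (od3 x) := mul_pos hc hpos
    _ ≤ _ := (hcoer _ (od3_isSymm x)).trans_eq (dot3_apply_od3 C x x)

lemma dot3_apply_add_od3 (hC : ∀ A B : M3, A.IsSymm → B.IsSymm → dot3 (C A) B = dot3 A (C B))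
    {A : M3} (hA : A.IsSymm) (hCA : (C A).IsSymm) (x : Fin 3 → ℝ) :
    dot3 (C (A + od3 x)) (A + od3 x)
      = dot3 (C A) A + 2 * (x ⬝ᵥ (C A)ᵀ 2) + x ⬝ᵥ (cmat C *ᵥ x) := by
  have hcross : dot3 (C (od3 x)) A = dot3 (C A) (od3 x) := by
    rw [hC _ _ (od3_isSymm x) hA, dot3_comm]
  have hadd : dot3 (C (A + od3 x)) (A + od3 x) = dot3 (C A) A + dot3 (C A) (od3 x)
      + dot3 (C (od3 x)) A + dot3 (C (od3 x)) (od3 x) := by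
    simp only [map_add, dot3, add_mul, mul_add, trace_add]
    ring
  rw [hadd, hcross, dot3_od3 hCA, dot3_apply_od3]
  ring

end Tensor

theorem energy_splitting_general
    (C : M3 →ₗ[ℝ] M3) (c : ℝ) (hc : 0 < c)
    (hCsymm : ∀ A : M3, A.IsSymm → (C A).IsSymm)
    (hCsa : ∀ A B : M3, A.IsSymm → B.IsSymm → dot3 (C A) B = dot3 A (C B))
    (hCcoer : ∀ A : M3, A.IsSymm → c * dot3 A A ≤ dot3 (C A) A)
    (Zb : M3) (hZs : Zb.IsSymm) (G : Fin 3 → ℝ) :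
    dot3 (C (Zb + od3 (zf C Zb G))) (Zb + od3 (zf C Zb G))
      = qbar C Zb + ((cmat C) *ᵥ ((cmat C)⁻¹ *ᵥ G)) ⬝ᵥ ((cmat C)⁻¹ *ᵥ G) := by
  have hCZ := hCsymm Zb hZs
  have hdet : IsUnit (cmat C).det :=
    (isUnit_iff_isUnit_det _).mp (cmat_posDef C hCsa hc hCcoer).isUnit
  have hsq := (cmat_isSymm C hCsa).complete_square hdet ((C Zb)ᵀ 2) G
  have hz : zf C Zb G = (cmat C)⁻¹ *ᵥ (G - (C Zb)ᵀ 2) := rfl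
  rw [dot3_apply_add_od3 C hCsa hZs hCZ, qbar_eq C hCsa hZs hCZ, hz]
  linarith

/-- Let `ℂ` be an elasticity tensor, coercive with constant `c > 0`, let
`Z̄ ∈ Sym₂`, `G ∈ ℝ³`, and let `z` be given by `z_j = (𝕔⁻¹)_{ji}(G_i − (ℂZ̄)_{i3})`.  Then,
with `Z := Z̄ + z⊙e₃` and `𝖿 := 𝕔⁻¹G`, one has the energy splitting
`ℂZ·Z = C̄Z̄·Z̄ + 𝕔𝖿·𝖿`. -/
theorem energy_splitting
    (C : M3 →ₗ[ℝ] M3) (c : ℝ) (hc : 0 < c)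
    (hCsymm : ∀ A : M3, A.IsSymm → (C A).IsSymm)
    (hCsa : ∀ A B : M3, A.IsSymm → B.IsSymm → dot3 (C A) B = dot3 A (C B))
    (hCcoer : ∀ A : M3, A.IsSymm → c * dot3 A A ≤ dot3 (C A) A)
    (Zb : M3) (hZs : Zb.IsSymm) (hZp : planar Zb) (G : Fin 3 → ℝ) :
    dot3 (C (Zb + od3 (zf C Zb G))) (Zb + od3 (zf C Zb G))
      = qbar C Zb + ((cmat C) *ᵥ ((cmat C)⁻¹ *ᵥ G)) ⬝ᵥ ((cmat C)⁻¹ *ᵥ G) :=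
  energy_splitting_general C c hc hCsymm hCsa hCcoer Zb hZs G
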